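/- Let A be a complex Banach space, γ : ℤ → ℝ with γ(n) > 0 for all n, and s ≥ 0. Let (f_k)_{k ∈ ℕ} be a sequence of integrable functions f_k : AddCircle 1 → A, each with the family n ↦ (1 + γ(n)^2)^(s/2) ‖fourierCoeff f_k n‖ summable over ℤ, and suppose the sequence is Cauchy in the spectral Barron norm: for every ε > 0 there exists N such that for all m, k ≥ N, ∑'_{n} (1 + γ(n)^2)^(s/2) ‖fourierCoeff f_m n − fourierCoeff f_k n‖ < ε. Then there exists a continuous function g : AddCircle 1 → A with n ↦ (1 + γ(n)^2)^(s/2) ‖fourierCoeff g n‖ summable, such that ∑'_{n} (1 + γ(n)^2)^(s/2) ‖fourierCoeff f_k n − fourierCoeff g n‖ → 0 as k → ∞. (Torus instance of the completeness of the spectral Barron space 𝔅^s_γ(𝕋, A); the case s = 0 is the base theorem and general s ≥ 0 is the corollary.) -/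

import Mathlib

/-!
Taking Fourier coefficients identifies the spectral Barron space with a weighted `ℓ¹(ℤ, A)`.
For positive weights the Cauchy condition forces coordinatewise convergence of the coefficients, and
Fatou's lemma for series shows that the coordinatewise limit `a` is the weighted-`ℓ¹` limit.
Since `s ≥ 0` the weights are at least `1`, so `∑ ‖a n‖ < ∞`; then the Fourier series
`∑ a n e_n` converges uniformly to a continuous function whose coefficients are exactly `a`.
-/

open MeasureTheory AddCircle Filter Topology

theorem summable_and_tsum_le_of_tendsto {ι : Type*} {f : ℕ → ι → ℝ} {g : ι → ℝ} {C : ℝ}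
    (hf : ∀ k, 0 ≤ f k) (hlim : ∀ i, Tendsto (fun k => f k i) atTop (𝓝 (g i)))
    (hC : ∀ᶠ k in atTop, Summable (f k) ∧ ∑' i, f k i ≤ C) :
    Summable g ∧ ∑' i, g i ≤ C := by
  have hg : 0 ≤ g := fun i => ge_of_tendsto' (hlim i) fun k => hf k i
  have hfin : ∀ F : Finset ι, ∑ i ∈ F, g i ≤ C := fun F =>
    le_of_tendsto (tendsto_finsetSum F fun i _ => hlim i) <| hC.mono fun k hk =>
      (hk.1.sum_le_tsum F fun i _ => hf k i).trans hk.2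
  exact ⟨summable_of_sum_le hg hfin, Real.tsum_le_of_sum_le hg hfin⟩

section WeightedSummable

variable {ι A : Type*} [SeminormedAddCommGroup A]

theorem summable_mul_norm_sub {w : ι → ℝ} (hw : 0 ≤ w) {x y : ι → A}
    (hx : Summable fun i => w i * ‖x i‖) (hy : Summable fun i => w i * ‖y i‖) :
    Summable fun i => w i * ‖x i - y i‖ :=
  (hx.add hy).of_nonneg_of_le (fun i => mul_nonneg (hw i) (norm_nonneg _)) fun i =>
    (mul_le_mul_of_nonneg_left (norm_sub_le _ _) (hw i)).trans_eq (mul_add _ _ _)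

variable {w : ι → ℝ} {c : ℕ → ι → A}

theorem cauchySeq_apply_of_tsum_mul_norm_sub (hw : ∀ i, 0 < w i)
    (hcauchy : ∀ ε > 0, ∃ N : ℕ, ∀ m ≥ N, ∀ k ≥ N, ∑' i, w i * ‖c m i - c k i‖ < ε)
    (hsum : ∀ k, Summable fun i => w i * ‖c k i‖) (i : ι) :
    CauchySeq fun k => c k i := by
  refine Metric.cauchySeq_iff.2 fun ε hε => ?_
  obtain ⟨N, hN⟩ := hcauchy (w i * ε) (mul_pos (hw i) hε)
  refine ⟨N, fun m hm k hk => lt_of_mul_lt_mul_left ?_ (hw i).le⟩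
  calc w i * dist (c m i) (c k i) = w i * ‖c m i - c k i‖ := by rw [dist_eq_norm]
    _ ≤ ∑' j, w j * ‖c m j - c k j‖ :=
      (summable_mul_norm_sub (fun j => (hw j).le) (hsum m) (hsum k)).le_tsum i fun j _ =>
        mul_nonneg (hw j).le (norm_nonneg _)
    _ < w i * ε := hN m hm k hk

theorem exists_tendsto_tsum_mul_norm_sub_of_cauchy [CompleteSpace A] (hw : ∀ i, 0 < w i)
    (hsum : ∀ k, Summable fun i => w i * ‖c k i‖)
    (hcauchy : ∀ ε > 0, ∃ N : ℕ, ∀ m ≥ N, ∀ k ≥ N, ∑' i, w i * ‖c m i - c k i‖ < ε) :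
    ∃ a : ι → A, (Summable fun i => w i * ‖a i‖) ∧
      Tendsto (fun k => ∑' i, w i * ‖c k i - a i‖) atTop (𝓝 0) := by
  have hw₀ : 0 ≤ w := fun i => (hw i).le
  choose a ha using fun i =>
    cauchySeq_tendsto_of_complete (cauchySeq_apply_of_tsum_mul_norm_sub hw hcauchy hsum i)
  have htail : ∀ ε > 0, ∃ N : ℕ, ∀ k ≥ N,
      (Summable fun i => w i * ‖c k i - a i‖) ∧ ∑' i, w i * ‖c k i - a i‖ ≤ ε := by
    intro ε hε
    obtain ⟨N, hN⟩ := hcauchy ε hε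
    refine ⟨N, fun k hk => summable_and_tsum_le_of_tendsto
      (f := fun m i => w i * ‖c k i - c m i‖)
      (fun m i => mul_nonneg (hw₀ i) (norm_nonneg _))
      (fun i => ((tendsto_const_nhds.sub (ha i)).norm).const_mul _)
      (eventually_atTop.2 ⟨N, fun m hm =>
        ⟨summable_mul_norm_sub hw₀ (hsum k) (hsum m), (hN k hk m hm).le⟩⟩)⟩
  obtain ⟨N, hN⟩ := htail 1 one_pos
  refine ⟨a, by simpa using summable_mul_norm_sub hw₀ (hsum N) (hN N le_rfl).1, ?_⟩
  refine tendsto_order.2 ⟨fun b hb => Eventually.of_forall fun k =>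
    hb.trans_le (tsum_nonneg fun i => mul_nonneg (hw₀ i) (norm_nonneg _)), fun ε hε => ?_⟩
  obtain ⟨N, hN⟩ := htail (ε / 2) (half_pos hε)
  exact eventually_atTop.2 ⟨N, fun k hk => (hN k hk).2.trans_lt (half_lt_self hε)⟩

end WeightedSummable

section FourierSeries

variable {T : ℝ} {E : Type*} [NormedAddCommGroup E] [NormedSpace ℂ E] [CompleteSpace E]

theorem continuous_tsum_fourier_smul {a : ℤ → E} (ha : Summable fun m => ‖a m‖) :
    Continuous fun x : AddCircle T => ∑' m, fourier m x • a m :=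
  continuous_tsum (fun m => (fourier m).continuous.smul continuous_const) ha fun m x => by
    simp [norm_smul, Circle.norm_coe]

variable [Fact (0 < T)]

theorem fourierCoeff_smul_const (φ : AddCircle T → ℂ) (v : E) (n : ℤ) :
    fourierCoeff (fun x => φ x • v) n = fourierCoeff φ n • v := by
  simp_rw [fourierCoeff, smul_smul, integral_smul_const, smul_eq_mul]

theorem fourierCoeff_tsum_fourier_smul {a : ℤ → E} (ha : Summable fun m => ‖a m‖) (n : ℤ) :
    fourierCoeff (fun x : AddCircle T => ∑' m, fourier m x • a m) n = a n := by
  have hint : ∀ m, Integrable (fun x : AddCircle T => fourier (-n) x • fourier m x • a m)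
      haarAddCircle := fun m => ((integrable_const (a m)).fourier_smul m).fourier_smul (-n)
  calc fourierCoeff (fun x : AddCircle T => ∑' m, fourier m x • a m) n
      = ∫ x, ∑' m, fourier (-n) x • fourier m x • a m ∂haarAddCircle := by
        simp_rw [fourierCoeff, tsum_const_smul'']
    _ = ∑' m, fourierCoeff (fun x : AddCircle T => fourier m x • a m) n :=
        (integral_tsum_of_summable_integral_norm hint
          (by simpa [norm_smul, Circle.norm_coe] using ha)).symm
    _ = a n := by
        simp_rw [fourierCoeff_smul_const, fourierCoeff_fourier]
        rw [tsum_eq_single n fun m hm => by simp [hm]]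
        simp

end FourierSeries

theorem barron_complete_general
    {A : Type} [NormedAddCommGroup A] [NormedSpace ℂ A] [CompleteSpace A]
    (γ : ℤ → ℝ) (s : ℝ) (hs : 0 ≤ s)
    (f : ℕ → AddCircle (1 : ℝ) → A)
    (hsum : ∀ k, Summable fun n : ℤ => (1 + γ n ^ 2) ^ (s / 2) * ‖fourierCoeff (f k) n‖)
    (hcauchy : ∀ ε > 0, ∃ N : ℕ, ∀ m ≥ N, ∀ k ≥ N,
      (∑' n : ℤ, (1 + γ n ^ 2) ^ (s / 2) *
        ‖fourierCoeff (f m) n - fourierCoeff (f k) n‖) < ε) :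
    ∃ g : AddCircle (1 : ℝ) → A, Continuous g ∧
      (Summable fun n : ℤ => (1 + γ n ^ 2) ^ (s / 2) * ‖fourierCoeff g n‖) ∧
      Tendsto (fun k : ℕ => ∑' n : ℤ, (1 + γ n ^ 2) ^ (s / 2) *
        ‖fourierCoeff (f k) n - fourierCoeff g n‖) atTop (nhds 0) := by
  have hw : ∀ n, 1 ≤ (1 + γ n ^ 2) ^ (s / 2) := fun n =>
    Real.one_le_rpow (le_add_of_nonneg_right (sq_nonneg _)) (by positivity)
  obtain ⟨a, ha, hlim⟩ := exists_tendsto_tsum_mul_norm_sub_of_cauchy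
    (c := fun k => fourierCoeff (f k)) (fun n => one_pos.trans_le (hw n)) hsum hcauchy
  have ha₁ : Summable fun n => ‖a n‖ :=
    ha.of_nonneg_of_le (fun n => norm_nonneg _) fun n =>
      le_mul_of_one_le_left (norm_nonneg _) (hw n)
  have hcoeff : fourierCoeff (fun x : AddCircle (1 : ℝ) => ∑' m, fourier m x • a m) = a :=
    funext (fourierCoeff_tsum_fourier_smul ha₁)
  exact ⟨_, continuous_tsum_fourier_smul ha₁, by rwa [hcoeff], by rwa [hcoeff]⟩

theorem barron_complete
    {A : Type} [NormedAddCommGroup A] [NormedSpace ℂ A] [CompleteSpace A]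
    (γ : ℤ → ℝ) (hγ : ∀ n, 0 < γ n) (s : ℝ) (hs : 0 ≤ s)
    (f : ℕ → AddCircle (1 : ℝ) → A)
    (hint : ∀ k, Integrable (f k) haarAddCircle)
    (hsum : ∀ k, Summable fun n : ℤ => (1 + γ n ^ 2) ^ (s / 2) * ‖fourierCoeff (f k) n‖)
    (hcauchy : ∀ ε > 0, ∃ N : ℕ, ∀ m ≥ N, ∀ k ≥ N,
      (∑' n : ℤ, (1 + γ n ^ 2) ^ (s / 2) *
        ‖fourierCoeff (f m) n - fourierCoeff (f k) n‖) < ε) :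
    ∃ g : AddCircle (1 : ℝ) → A, Continuous g ∧
      (Summable fun n : ℤ => (1 + γ n ^ 2) ^ (s / 2) * ‖fourierCoeff g n‖) ∧
      Tendsto (fun k : ℕ => ∑' n : ℤ, (1 + γ n ^ 2) ^ (s / 2) *
        ‖fourierCoeff (f k) n - fourierCoeff g n‖) atTop (nhds 0) :=
  barron_complete_general γ s hs f hsum hcauchy
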